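/- arXiv:math/0612745 — 2 statements merged into one kernel-verified Lean document; each statement's English description precedes it below -/
import Mathlib

section
/- Let S ⊆ [0,∞)^m × ℕ^n be a set such that for each i ≤ m and each R > 0 the set {αᵢ : (α,β) ∈ S} ∩ [0,R] is finite, let A, R > 0, and for each p ∈ ℕ^q let b_p be holomorphic on Ω(c,C)^m × D_R^n with mixed asymptotic expansion B_p satisfying supp B_p ⊆ S and |b_p(z,y)| ≤ A/R^{|p|} for all (z,y) ∈ Ω(c,C)^m × D_R^n. Then the series g(z,y,w) := Σ_{p ∈ ℕ^q} b_p(z,y)·w^p converges locally uniformly on Ω(c,C)^m × D_R^n × D_R^q, defines a holomorphic function there, and g has mixed asymptotic expansion (α,β,p) ↦ B_p(α,β). -/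
/-!
On a neighbourhood of each point of `Ω(c,C)^m × D_R^(n+q)` the terms `b_p(z,y) w^p` are bounded by
`A (r/R)^|p|` for some `r < R`, a summable geometric family. The Weierstrass M-test then gives
locally uniform convergence, and Cauchy estimates bound the derivatives of the terms by a summable
family as well, so the sum is holomorphic.

For the expansion of order `ν`, the terms with `|p| > ν` contribute `O(‖(E(z),y,w)‖^(⌊ν⌋+1))`,
which is `o(‖(E(z),y,w)‖^ν)`. Each of the finitely many remaining `b_p` is replaced by its own
expansion of a suitable order `μ_p > ν - |p|`; since `|w^p| ≤ ‖(E(z),y,w)‖^|p|`, the errors are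
`o(‖(E(z),y,w)‖^ν)`, and regrouping the partial sums by `p` gives the partial sum of the claimed
expansion.
-/

noncomputable section
open scoped Classical

/-- Logarithmic model of a standard quadratic domain:
`Ω(c,C) = {z : Re z < log c - C·√|Im z|}`. -/
def SQD (c C : ℝ) : Set ℂ := {z : ℂ | z.re < Real.log c - C * Real.sqrt |z.im|}

/-- The cartesian power `Ω(c,C)^m`. -/
def QDom (c C : ℝ) (m : ℕ) : Set (Fin m → ℂ) := {z | ∀ i, z i ∈ SQD c C}

/-- Open disc `D_R` of radius `R` centred at `0`. -/
def Disc (R : ℝ) : Set ℂ := {w : ℂ | ‖w‖ < R}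

/-- Polydisc `D_R^n`. -/
def PDisc (R : ℝ) (n : ℕ) : Set (Fin n → ℂ) := {y | ∀ j, y j ∈ Disc R}

/-- The exponential monomial `exp⟨α,z⟩`. -/
def expMono {m : ℕ} (α : Fin m → ℝ) (z : Fin m → ℂ) : ℂ :=
  Complex.exp (∑ i, (α i : ℂ) * z i)

/-- Euclidean norm of `E(z) = (exp (Re z₁), …, exp (Re z_m))`. -/
def eNorm {m : ℕ} (z : Fin m → ℂ) : ℝ :=
  Real.sqrt (∑ i, Real.exp ((z i).re) ^ 2)

/-- A generalized power series with natural support: nonnegative exponents, and in each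
coordinate the set of exponents below any bound is finite. -/
def NaturalSeries {m : ℕ} (a : (Fin m → ℝ) → ℂ) : Prop :=
  (∀ α, a α ≠ 0 → ∀ i, 0 ≤ α i) ∧
  ∀ i : Fin m, ∀ R : ℝ, 0 < R → {r : ℝ | (∃ α, a α ≠ 0 ∧ α i = r) ∧ r ≤ R}.Finite

/-- `f` has asymptotic expansion `a` on `Ω(c,C)^m`: for every `ν > 0` there is a smaller
standard quadratic domain on which `f` minus the partial sum of weight `≤ ν` is
`o(‖E(z)‖^ν)` as `‖E(z)‖ → 0`. -/
def HasAsymExp {m : ℕ} (c C : ℝ) (f : (Fin m → ℂ) → ℂ) (a : (Fin m → ℝ) → ℂ) : Prop :=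
  NaturalSeries a ∧
  ∀ ν : ℝ, 0 < ν → ∃ c' C' : ℝ, 0 < c' ∧ 0 < C' ∧ SQD c' C' ⊆ SQD c C ∧
    ∃ F : Finset (Fin m → ℝ),
      (∀ α, α ∈ F ↔ a α ≠ 0 ∧ ∑ i, α i ≤ ν) ∧
      ∀ ε : ℝ, 0 < ε → ∃ δ : ℝ, 0 < δ ∧
        ∀ z ∈ QDom c' C' m, eNorm z < δ →
          ‖f z - ∑ α ∈ F, a α * expMono α z‖ ≤ ε * eNorm z ^ ν

/-- Euclidean norm of `(E(z),y) = (exp Re z₁, …, exp Re z_m, |y₁|, …, |y_n|)`. -/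
def mixedNorm {m n : ℕ} (z : Fin m → ℂ) (y : Fin n → ℂ) : ℝ :=
  Real.sqrt (∑ i, Real.exp ((z i).re) ^ 2 + ∑ j, ‖y j‖ ^ 2)

/-- A mixed series: coefficient function with natural support in the first `m`
(real-exponent) coordinates. -/
def MixedNatural {m n : ℕ} (a : (Fin m → ℝ) → (Fin n → ℕ) → ℂ) : Prop :=
  (∀ α β, a α β ≠ 0 → ∀ i, 0 ≤ α i) ∧
  ∀ i : Fin m, ∀ R : ℝ, 0 < R →
    {r : ℝ | (∃ α β, a α β ≠ 0 ∧ α i = r) ∧ r ≤ R}.Finite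

/-- `f` has mixed asymptotic expansion `a` on `Ω(c,C)^m × D_R^n`. -/
def HasMixedAsymExp {m n : ℕ} (c C R : ℝ)
    (f : ((Fin m → ℂ) × (Fin n → ℂ)) → ℂ)
    (a : (Fin m → ℝ) → (Fin n → ℕ) → ℂ) : Prop :=
  MixedNatural a ∧
  ∀ ν : ℝ, 0 < ν → ∃ c' C' R' : ℝ, 0 < c' ∧ 0 < C' ∧ 0 < R' ∧ R' ≤ R ∧
    SQD c' C' ⊆ SQD c C ∧
    ∃ F : Finset ((Fin m → ℝ) × (Fin n → ℕ)),
      (∀ p, p ∈ F ↔ a p.1 p.2 ≠ 0 ∧ (∑ i, p.1 i) + (∑ j, (p.2 j : ℝ)) ≤ ν) ∧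
      ∀ ε : ℝ, 0 < ε → ∃ δ : ℝ, 0 < δ ∧
        ∀ z ∈ QDom c' C' m, ∀ y ∈ PDisc R' n, mixedNorm z y < δ →
          ‖f (z, y) - ∑ p ∈ F, a p.1 p.2 * expMono p.1 z * ∏ j, (y j) ^ (p.2 j)‖
            ≤ ε * mixedNorm z y ^ ν

open Filter Topology Asymptotics Metric

theorem hasSum_fin_prod {α : Type*} {q : ℕ} {f : Fin q → α → ℝ} {s : Fin q → ℝ}
    (hf : ∀ j a, 0 ≤ f j a) (hs : ∀ j, HasSum (f j) (s j)) :
    HasSum (fun p : Fin q → α => ∏ j, f j (p j)) (∏ j, s j) := by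
  induction q with
  | zero => simp
  | succ q ih =>
    have hprod :
        HasSum (fun p : Fin q → α => ∏ j : Fin q, f j.succ (p j)) (∏ j : Fin q, s j.succ) :=
      ih (fun j => hf j.succ) fun j => hs j.succ
    have hsum := (hs 0).summable.mul_of_nonneg hprod.summable (fun a => hf 0 a)
      fun p => Finset.prod_nonneg fun j _ => hf j.succ (p j)
    rw [← (Fin.consEquiv fun _ => α).hasSum_iff, Fin.prod_univ_succ]
    refine ((hs 0).mul hprod hsum).congr_fun fun x => ?_
    simp [Fin.consEquiv, Fin.prod_univ_succ]

theorem hasSum_pow_sum_fin (q : ℕ) {t : ℝ} (h0 : 0 ≤ t) (h1 : t < 1) :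
    HasSum (fun p : Fin q → ℕ => t ^ ∑ j, p j) ((1 - t)⁻¹ ^ q) := by
  simpa [Finset.prod_pow_eq_pow_sum] using
    hasSum_fin_prod (fun _ k => pow_nonneg h0 k) fun _ : Fin q => hasSum_geometric_of_lt_one h0 h1

section LocallyBoundedSeries

variable {ι E F : Type*} [NormedAddCommGroup F] {f : ι → E → F} {U : Set E}

theorem tendstoLocallyUniformlyOn_tsum_of_locally_bounded [CompleteSpace F] [TopologicalSpace E]
    (hb : ∀ x ∈ U, ∃ u : ι → ℝ, Summable u ∧ ∀ᶠ y in 𝓝 x, ∀ i, ‖f i y‖ ≤ u i) :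
    TendstoLocallyUniformlyOn (fun s y => ∑ i ∈ s, f i y) (fun y => ∑' i, f i y) atTop U := by
  refine tendstoLocallyUniformlyOn_of_forall_exists_nhds fun x hx => ?_
  obtain ⟨u, hu, hev⟩ := hb x hx
  exact ⟨_, mem_nhdsWithin_of_mem_nhds hev, tendstoUniformlyOn_tsum hu fun i y hy => hy i⟩

variable [NormedAddCommGroup E] [NormedSpace ℂ E] [NormedSpace ℂ F]

theorem norm_fderiv_le_of_forall_mem_ball_norm_le {g : E → F} {x : E} {r M : ℝ}
    (hd : DifferentiableOn ℂ g (ball x r)) (hr : 0 < r) (hb : ∀ y ∈ ball x r, ‖g y‖ ≤ M) :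
    ‖fderiv ℂ g x‖ ≤ 2 * M / r := by
  refine Complex.norm_fderiv_le_div_of_mapsTo_ball hd (fun y hy => mem_closedBall.2 ?_) hr
  linarith [dist_le_norm_add_norm (g y) (g x), hb y hy, hb x (mem_ball_self hr)]

theorem differentiableOn_tsum_of_locally_bounded [CompleteSpace F] (hU : IsOpen U)
    (hf : ∀ i, DifferentiableOn ℂ (f i) U)
    (hb : ∀ x ∈ U, ∃ u : ι → ℝ, Summable u ∧ ∀ᶠ y in 𝓝 x, ∀ i, ‖f i y‖ ≤ u i) :
    DifferentiableOn ℂ (fun y => ∑' i, f i y) U := by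
  intro x hx
  obtain ⟨u, hu, hev⟩ := hb x hx
  obtain ⟨ε, hε, hball⟩ := eventually_nhds_iff_ball.1 (hev.and (hU.mem_nhds hx))
  have hε2 := half_pos hε
  have hsub : ∀ y ∈ ball x (ε / 2), ball y (ε / 2) ⊆ ball x ε := fun y hy =>
    ball_subset_ball' (by linarith [mem_ball.1 hy])
  have hderiv : ∀ i, ∀ y ∈ ball x (ε / 2), ‖fderiv ℂ (f i) y‖ ≤ 2 * u i / (ε / 2) :=
    fun i y hy => norm_fderiv_le_of_forall_mem_ball_norm_le
      ((hf i).mono fun z hz => (hball z (hsub y hy hz)).2) hε2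
      fun z hz => (hball z (hsub y hy hz)).1 i
  have hdiff : ∀ i, ∀ y ∈ ball x (ε / 2), HasFDerivAt (f i) (fderiv ℂ (f i) y) y :=
    fun i y hy => ((hf i).differentiableAt (hU.mem_nhds
      (hball y (ball_subset_ball (by linarith) hy)).2)).hasFDerivAt
  have hsum : Summable fun i => f i x :=
    hu.of_norm_bounded (hball x (mem_ball_self hε)).1
  exact (hasFDerivAt_tsum_of_isPreconnected ((hu.mul_left 2).div_const _) isOpen_ball
    (convex_ball x _).isPreconnected hdiff hderiv (mem_ball_self hε2) hsum
    (mem_ball_self hε2)).differentiableAt.differentiableWithinAt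

end LocallyBoundedSeries

section Domains

theorem isOpen_SQD (c C : ℝ) : IsOpen (SQD c C) :=
  isOpen_lt Complex.continuous_re (by fun_prop)

theorem isOpen_QDom (c C : ℝ) (m : ℕ) : IsOpen (QDom c C m) := by
  have : QDom c C m = Set.univ.pi fun _ => SQD c C := by ext; simp [QDom]
  exact this ▸ isOpen_set_pi Set.finite_univ fun _ _ => isOpen_SQD c C

theorem isOpen_PDisc (R : ℝ) (n : ℕ) : IsOpen (PDisc R n) := by
  have : PDisc R n = Set.univ.pi fun _ => Metric.ball 0 R := by ext; simp [PDisc, Disc]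
  exact this ▸ isOpen_set_pi Set.finite_univ fun _ _ => Metric.isOpen_ball

theorem SQD_subset_SQD {c₁ C₁ c₂ C₂ : ℝ} (hc₁ : 0 < c₁) (hc : c₁ ≤ c₂) (hC : C₂ ≤ C₁) :
    SQD c₁ C₁ ⊆ SQD c₂ C₂ := fun z hz =>
  hz.trans_le (sub_le_sub (Real.log_le_log hc₁ hc) (by gcongr))

theorem QDom_subset_QDom {c₁ C₁ c₂ C₂ : ℝ} {m : ℕ} (h : SQD c₁ C₁ ⊆ SQD c₂ C₂) :
    QDom c₁ C₁ m ⊆ QDom c₂ C₂ m := fun _ hz i => h (hz i)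

theorem PDisc_subset_PDisc {R₁ R₂ : ℝ} {n : ℕ} (h : R₁ ≤ R₂) : PDisc R₁ n ⊆ PDisc R₂ n :=
  fun _ hy j => (hy j).trans_le h

theorem norm_lt_of_mem_PDisc {R : ℝ} {n : ℕ} (hR : 0 < R) {y : Fin n → ℂ} (hy : y ∈ PDisc R n) :
    ‖y‖ < R :=
  (pi_norm_lt_iff hR).2 hy

theorem mixedNorm_nonneg {m n : ℕ} (z : Fin m → ℂ) (y : Fin n → ℂ) : 0 ≤ mixedNorm z y :=
  Real.sqrt_nonneg _

theorem norm_le_mixedNorm {m n : ℕ} (z : Fin m → ℂ) (y : Fin n → ℂ) (j : Fin n) :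
    ‖y j‖ ≤ mixedNorm z y := by
  refine Real.le_sqrt_of_sq_le ?_
  have := Finset.single_le_sum (fun j _ => sq_nonneg ‖y j‖) (Finset.mem_univ j)
  have := Finset.sum_nonneg fun i (_ : i ∈ Finset.univ) => sq_nonneg (Real.exp (z i).re)
  linarith

end Domains

section Splitting

variable {m n q : ℕ}

def zyPart (x : (Fin m → ℂ) × (Fin (n + q) → ℂ)) : (Fin m → ℂ) × (Fin n → ℂ) :=
  (x.1, fun i => x.2 (Fin.castAdd q i))

def wPart (x : (Fin m → ℂ) × (Fin (n + q) → ℂ)) : Fin q → ℂ :=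
  fun j => x.2 (Fin.natAdd n j)

theorem zyPart_mem {c C R : ℝ} {x : (Fin m → ℂ) × (Fin (n + q) → ℂ)}
    (hx : x ∈ QDom c C m ×ˢ PDisc R (n + q)) : zyPart x ∈ QDom c C m ×ˢ PDisc R n :=
  ⟨hx.1, fun i => hx.2 (Fin.castAdd q i)⟩

theorem mixedNorm_zyPart_le (x : (Fin m → ℂ) × (Fin (n + q) → ℂ)) :
    mixedNorm (zyPart x).1 (zyPart x).2 ≤ mixedNorm x.1 x.2 := by
  refine Real.sqrt_le_sqrt ?_
  rw [Fin.sum_univ_add (f := fun j => ‖x.2 j‖ ^ 2)]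
  have := Finset.sum_nonneg fun j (_ : j ∈ Finset.univ) => sq_nonneg ‖wPart x j‖
  simp only [zyPart, wPart] at this ⊢
  linarith

theorem norm_wPart_le_mixedNorm (x : (Fin m → ℂ) × (Fin (n + q) → ℂ)) (j : Fin q) :
    ‖wPart x j‖ ≤ mixedNorm x.1 x.2 :=
  norm_le_mixedNorm x.1 x.2 (Fin.natAdd n j)

def coeffTerm (b : (Fin q → ℕ) → ((Fin m → ℂ) × (Fin n → ℂ)) → ℂ) (p : Fin q → ℕ)
    (x : (Fin m → ℂ) × (Fin (n + q) → ℂ)) : ℂ :=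
  b p (zyPart x) * ∏ j, wPart x j ^ p j

variable {c C R A : ℝ} {b : (Fin q → ℕ) → ((Fin m → ℂ) × (Fin n → ℂ)) → ℂ}

theorem differentiableOn_coeffTerm {p : Fin q → ℕ}
    (hb : DifferentiableOn ℂ (b p) (QDom c C m ×ˢ PDisc R n)) :
    DifferentiableOn ℂ (coeffTerm b p) (QDom c C m ×ˢ PDisc R (n + q)) := by
  have hzy : Differentiable ℂ (zyPart : (Fin m → ℂ) × (Fin (n + q) → ℂ) → _) := by
    unfold zyPart; fun_prop
  refine (hb.comp hzy.differentiableOn fun x hx => zyPart_mem hx).mul ?_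
  have hw : ∀ j x,
      DifferentiableAt ℂ (fun x : (Fin m → ℂ) × (Fin (n + q) → ℂ) => wPart x j ^ p j) x :=
    fun j x => by unfold wPart; fun_prop
  exact fun x _ => (HasFDerivAt.finsetProd fun j _ => (hw j x).hasFDerivAt).differentiableAt
    |>.differentiableWithinAt

theorem norm_coeffTerm_le
    (hbd : ∀ p, ∀ z ∈ QDom c C m, ∀ y ∈ PDisc R n, ‖b p (z, y)‖ ≤ A / R ^ (∑ j, p j))
    (p : Fin q → ℕ) {x : (Fin m → ℂ) × (Fin (n + q) → ℂ)}
    (hx : x ∈ QDom c C m ×ˢ PDisc R (n + q)) {r : ℝ} (hr : ∀ j, ‖wPart x j‖ ≤ r) :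
    ‖coeffTerm b p x‖ ≤ A * (r / R) ^ ∑ j, p j := by
  have hb := hbd p _ (zyPart_mem hx).1 _ (zyPart_mem hx).2
  have hw : ∏ j, ‖wPart x j‖ ^ p j ≤ r ^ ∑ j, p j := by
    rw [← Finset.prod_pow_eq_pow_sum]
    exact Finset.prod_le_prod (fun j _ => by positivity) fun j _ => by gcongr; exact hr j
  calc ‖coeffTerm b p x‖ = ‖b p (zyPart x)‖ * ∏ j, ‖wPart x j‖ ^ p j := by
        simp [coeffTerm, norm_prod]
    _ ≤ A / R ^ (∑ j, p j) * r ^ ∑ j, p j :=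
        mul_le_mul hb hw (by positivity) ((norm_nonneg _).trans hb)
    _ = A * (r / R) ^ ∑ j, p j := by rw [div_pow]; ring

theorem exists_summable_bound_coeffTerm
    (hbd : ∀ p, ∀ z ∈ QDom c C m, ∀ y ∈ PDisc R n, ‖b p (z, y)‖ ≤ A / R ^ (∑ j, p j))
    (hR : 0 < R) {x : (Fin m → ℂ) × (Fin (n + q) → ℂ)}
    (hx : x ∈ QDom c C m ×ˢ PDisc R (n + q)) :
    ∃ u : (Fin q → ℕ) → ℝ, Summable u ∧ ∀ᶠ y in 𝓝 x, ∀ p, ‖coeffTerm b p y‖ ≤ u p := by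
  obtain ⟨r, hxr, hr⟩ := exists_between (norm_lt_of_mem_PDisc hR hx.2)
  have hr0 : 0 ≤ r := (norm_nonneg _).trans hxr.le
  refine ⟨fun p => A * (r / R) ^ ∑ j, p j,
    ((hasSum_pow_sum_fin q (by positivity) ((div_lt_one hR).2 hr)).summable.mul_left A), ?_⟩
  have hnear : ∀ᶠ y in 𝓝 x, ‖y.2‖ < r :=
    (continuous_snd.norm.continuousAt).eventually_lt continuousAt_const hxr
  filter_upwards [hnear, ((isOpen_QDom c C m).prod (isOpen_PDisc R _)).mem_nhds hx]
    with y hy hyU p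
  exact norm_coeffTerm_le hbd p hyU fun j => (norm_le_pi_norm y.2 _).trans hy.le

end Splitting

section RpowNearZero

variable {α : Type*} {l : Filter α} {N : α → ℝ}

theorem isBigO_rpow_rpow_of_le (hN : Tendsto N l (𝓝 0)) (hN0 : ∀ x, 0 ≤ N x) {μ ν : ℝ}
    (hν : 0 ≤ ν) (h : ν ≤ μ) : (fun x => N x ^ μ) =O[l] fun x => N x ^ ν := by
  refine IsBigO.of_bound 1 ?_
  filter_upwards [hN.eventually (eventually_le_nhds one_pos)] with x hx
  rw [one_mul, Real.norm_of_nonneg (Real.rpow_nonneg (hN0 x) _),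
    Real.norm_of_nonneg (Real.rpow_nonneg (hN0 x) _)]
  exact Real.rpow_le_rpow_of_exponent_ge' (hN0 x) hx hν h

theorem isLittleO_rpow_rpow_of_lt (hN : Tendsto N l (𝓝 0)) (hN0 : ∀ x, 0 ≤ N x) {μ ν : ℝ}
    (hν : 0 ≤ ν) (h : ν < μ) : (fun x => N x ^ μ) =o[l] fun x => N x ^ ν := by
  have hsmall : (fun x => N x ^ (μ - ν)) =o[l] fun _ => (1 : ℝ) := by
    refine (isLittleO_one_iff ℝ).2 ?_
    simpa [Real.zero_rpow (sub_pos.2 h).ne'] using hN.rpow_const (Or.inr (sub_pos.2 h).le)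
  refine (hsmall.mul_isBigO (isBigO_refl (fun x => N x ^ ν) l)).congr (fun x => ?_)
    fun x => one_mul _
  rw [← Real.rpow_add' (hN0 x) (by linarith), sub_add_cancel]

end RpowNearZero

section MixedAsymptotics

variable {m n : ℕ}

def mixedZero (c C R : ℝ) (m n : ℕ) : Filter ((Fin m → ℂ) × (Fin n → ℂ)) :=
  comap (fun x => mixedNorm x.1 x.2) (𝓝 0) ⊓ 𝓟 (QDom c C m ×ˢ PDisc R n)

def mixedWeight (α : Fin m → ℝ) (β : Fin n → ℕ) : ℝ := ∑ i, α i + ∑ j, (β j : ℝ)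

def mixedPartialSum (a : (Fin m → ℝ) → (Fin n → ℕ) → ℂ) (F : Finset ((Fin m → ℝ) × (Fin n → ℕ)))
    (x : (Fin m → ℂ) × (Fin n → ℂ)) : ℂ :=
  ∑ t ∈ F, a t.1 t.2 * expMono t.1 x.1 * ∏ j, x.2 j ^ t.2 j

variable {c C R : ℝ}

theorem tendsto_mixedNorm_mixedZero :
    Tendsto (fun x => mixedNorm x.1 x.2) (mixedZero c C R m n) (𝓝 0) :=
  tendsto_comap.mono_left inf_le_left

theorem eventually_mem_mixedZero :
    ∀ᶠ x in mixedZero c C R m n, x ∈ QDom c C m ×ˢ PDisc R n :=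
  mem_inf_of_right (mem_principal_self _)

theorem isLittleO_mixedZero_iff {f : (Fin m → ℂ) × (Fin n → ℂ) → ℂ} {ν : ℝ} :
    f =o[mixedZero c C R m n] (fun x => mixedNorm x.1 x.2 ^ ν) ↔
      ∀ ε : ℝ, 0 < ε → ∃ δ : ℝ, 0 < δ ∧ ∀ z ∈ QDom c C m, ∀ y ∈ PDisc R n,
        mixedNorm z y < δ → ‖f (z, y)‖ ≤ ε * mixedNorm z y ^ ν := by
  simp only [isLittleO_iff, mixedZero, eventually_inf_principal, eventually_comap,
    Metric.eventually_nhds_iff, Real.dist_eq, sub_zero, Prod.forall, Set.mem_prod]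
  refine forall₂_congr fun ε _ => exists_congr fun δ => and_congr_right fun _ => ?_
  constructor
  · intro h z hz y hy hzy
    have := h (y := mixedNorm z y) (by rwa [abs_of_nonneg (mixedNorm_nonneg z y)]) z y rfl ⟨hz, hy⟩
    rwa [Real.norm_of_nonneg (Real.rpow_nonneg (mixedNorm_nonneg z y) _)] at this
  · rintro h r hr z y rfl ⟨hz, hy⟩
    rw [Real.norm_of_nonneg (Real.rpow_nonneg (mixedNorm_nonneg z y) _)]
    exact h z hz y hy (by rwa [abs_of_nonneg (mixedNorm_nonneg z y)] at hr)

theorem hasMixedAsymExp_iff {f : (Fin m → ℂ) × (Fin n → ℂ) → ℂ}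
    {a : (Fin m → ℝ) → (Fin n → ℕ) → ℂ} :
    HasMixedAsymExp c C R f a ↔ MixedNatural a ∧ ∀ ν : ℝ, 0 < ν →
      ∃ c' C' R' : ℝ, 0 < c' ∧ 0 < C' ∧ 0 < R' ∧ R' ≤ R ∧ SQD c' C' ⊆ SQD c C ∧
        ∃ F : Finset ((Fin m → ℝ) × (Fin n → ℕ)),
          (∀ t, t ∈ F ↔ a t.1 t.2 ≠ 0 ∧ mixedWeight t.1 t.2 ≤ ν) ∧
          (fun x => f x - mixedPartialSum a F x) =o[mixedZero c' C' R' m n]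
            fun x => mixedNorm x.1 x.2 ^ ν := by
  simp only [isLittleO_mixedZero_iff]
  rfl

end MixedAsymptotics

section SeriesAsymptotics

variable {m n q : ℕ} {c C R A c' C' R' : ℝ}

theorem tendsto_zyPart_mixedZero {c₁ C₁ R₁ : ℝ} (hc : SQD c' C' ⊆ SQD c₁ C₁) (hR : R' ≤ R₁) :
    Tendsto zyPart (mixedZero c' C' R' m (n + q)) (mixedZero c₁ C₁ R₁ m n) := by
  refine tendsto_inf.2 ⟨tendsto_comap_iff.2 ?_, tendsto_principal.2 ?_⟩
  · exact squeeze_zero (fun x => mixedNorm_nonneg _ _) (fun x => mixedNorm_zyPart_le x)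
      tendsto_mixedNorm_mixedZero
  · filter_upwards [eventually_mem_mixedZero] with x hx
    exact zyPart_mem ⟨QDom_subset_QDom hc hx.1, PDisc_subset_PDisc hR hx.2⟩

theorem isLittleO_mul_prod_wPart {l : Filter ((Fin m → ℂ) × (Fin (n + q) → ℂ))}
    (hN : Tendsto (fun x => mixedNorm x.1 x.2) l (𝓝 0)) {f : (Fin m → ℂ) × (Fin n → ℂ) → ℂ}
    {μ ν : ℝ} (hf : (fun x => f (zyPart x)) =o[l] fun x => mixedNorm (zyPart x).1 (zyPart x).2 ^ μ)
    {p : Fin q → ℕ} (hμ : 0 < μ) (hν : 0 ≤ ν) (hνμ : ν ≤ μ + ∑ j, (p j : ℝ)) :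
    (fun x => f (zyPart x) * ∏ j, wPart x j ^ p j) =o[l] fun x => mixedNorm x.1 x.2 ^ ν := by
  have hzy : (fun x => mixedNorm (zyPart x).1 (zyPart x).2 ^ μ) =O[l]
      fun x => mixedNorm x.1 x.2 ^ μ := by
    refine IsBigO.of_bound 1 (Eventually.of_forall fun x => ?_)
    rw [one_mul, Real.norm_of_nonneg (Real.rpow_nonneg (mixedNorm_nonneg _ _) _),
      Real.norm_of_nonneg (Real.rpow_nonneg (mixedNorm_nonneg _ _) _)]
    exact Real.rpow_le_rpow (mixedNorm_nonneg _ _) (mixedNorm_zyPart_le x) hμ.le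
  have hw : (fun x => ∏ j, wPart x j ^ p j) =O[l]
      fun x => mixedNorm x.1 x.2 ^ (∑ j, (p j : ℝ)) := by
    refine IsBigO.of_bound 1 (Eventually.of_forall fun x => ?_)
    rw [one_mul, Real.norm_of_nonneg (Real.rpow_nonneg (mixedNorm_nonneg _ _) _), norm_prod,
      ← Nat.cast_sum, Real.rpow_natCast, ← Finset.prod_pow_eq_pow_sum]
    exact Finset.prod_le_prod (fun j _ => by positivity) fun j _ => by
      rw [norm_pow]; gcongr; exact norm_wPart_le_mixedNorm x j
  have hpow : (fun x => mixedNorm x.1 x.2 ^ μ * mixedNorm x.1 x.2 ^ (∑ j, (p j : ℝ))) =O[l]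
      fun x => mixedNorm x.1 x.2 ^ ν := by
    refine (isBigO_rpow_rpow_of_le hN (fun x => mixedNorm_nonneg _ _) hν hνμ).congr_left
      fun x => ?_
    have : 0 ≤ ∑ j, (p j : ℝ) := by positivity
    exact Real.rpow_add' (mixedNorm_nonneg _ _) (by linarith)
  exact ((hf.trans_isBigO hzy).mul_isBigO hw).trans_isBigO hpow

theorem norm_tsum_coeffTerm_le {b : (Fin q → ℕ) → ((Fin m → ℂ) × (Fin n → ℂ)) → ℂ}
    (hbd : ∀ p, ∀ z ∈ QDom c C m, ∀ y ∈ PDisc R n, ‖b p (z, y)‖ ≤ A / R ^ (∑ j, p j))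
    (hR : 0 < R) (hA : 0 ≤ A) {K : ℕ} {s : Set (Fin q → ℕ)} (hs : ∀ p ∈ s, K ≤ ∑ j, p j)
    {x : (Fin m → ℂ) × (Fin (n + q) → ℂ)} (hx : x ∈ QDom c C m ×ˢ PDisc R (n + q)) {r : ℝ}
    (hr0 : 0 ≤ r) (hr : ∀ j, ‖wPart x j‖ ≤ r) (hrR : 2 * r ≤ R) :
    ‖∑' p : s, coeffTerm b p x‖ ≤ A * (2 * r / R) ^ K * 2 ^ q := by
  have hgeom := hasSum_pow_sum_fin q (t := 1 / 2) (by norm_num) (by norm_num)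
  have hbound : ∀ p : s,
      ‖coeffTerm b p x‖ ≤ A * (2 * r / R) ^ K * (1 / 2) ^ ∑ j, (p : Fin q → ℕ) j := by
    intro ⟨p, hp⟩
    have h2r : 2 * r / R ≤ 1 := (div_le_one hR).2 hrR
    calc ‖coeffTerm b p x‖ ≤ A * (r / R) ^ ∑ j, p j := norm_coeffTerm_le hbd p hx hr
      _ = A * (2 * r / R) ^ (∑ j, p j) * (1 / 2) ^ ∑ j, p j := by
        rw [mul_assoc, ← mul_pow]; congr 2; ring
      _ ≤ A * (2 * r / R) ^ K * (1 / 2) ^ ∑ j, p j := by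
        gcongr A * ?_ * _
        exact pow_le_pow_of_le_one (by positivity) h2r (hs p hp)
  refine (tsum_of_norm_bounded ((hgeom.summable.mul_left _).subtype s).hasSum hbound).trans ?_
  refine (Summable.tsum_subtype_le _ s (fun p => by positivity)
    (hgeom.summable.mul_left _)).trans ?_
  rw [tsum_mul_left, hgeom.tsum_eq]
  norm_num

theorem isBigO_tsum_coeffTerm {b : (Fin q → ℕ) → ((Fin m → ℂ) × (Fin n → ℂ)) → ℂ}
    (hbd : ∀ p, ∀ z ∈ QDom c C m, ∀ y ∈ PDisc R n, ‖b p (z, y)‖ ≤ A / R ^ (∑ j, p j))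
    (hR : 0 < R) (hA : 0 ≤ A) {K : ℕ} {s : Set (Fin q → ℕ)} (hs : ∀ p ∈ s, K ≤ ∑ j, p j)
    (hc : SQD c' C' ⊆ SQD c C) (hR' : R' ≤ R) :
    (fun x => ∑' p : s, coeffTerm b p x) =O[mixedZero c' C' R' m (n + q)]
      fun x => mixedNorm x.1 x.2 ^ (K : ℝ) := by
  refine IsBigO.of_bound (A * (2 / R) ^ K * 2 ^ q) ?_
  filter_upwards [eventually_mem_mixedZero, tendsto_mixedNorm_mixedZero.eventually
    (eventually_le_nhds (half_pos hR))] with x hx hxR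
  have hN0 := mixedNorm_nonneg x.1 x.2
  refine (norm_tsum_coeffTerm_le hbd hR hA hs ⟨QDom_subset_QDom hc hx.1,
    PDisc_subset_PDisc hR' hx.2⟩ hN0 (norm_wPart_le_mixedNorm x) (by linarith)).trans_eq ?_
  rw [Real.rpow_natCast, Real.norm_of_nonneg (by positivity)]
  ring

end SeriesAsymptotics

section NaturalSupport

variable {m n q : ℕ}

theorem single_le_mixedWeight_left {α : Fin m → ℝ} (hα : ∀ i, 0 ≤ α i) (β : Fin n → ℕ)
    (i : Fin m) : α i ≤ mixedWeight α β := by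
  have := Finset.single_le_sum (fun i _ => hα i) (Finset.mem_univ i)
  have : (0 : ℝ) ≤ ∑ j, (β j : ℝ) := by positivity
  unfold mixedWeight
  linarith

theorem single_le_mixedWeight_right {α : Fin m → ℝ} (hα : ∀ i, 0 ≤ α i) (β : Fin n → ℕ)
    (j : Fin n) : (β j : ℝ) ≤ mixedWeight α β := by
  have := Finset.single_le_sum (fun j _ => Nat.cast_nonneg (α := ℝ) (β j)) (Finset.mem_univ j)
  have := Finset.sum_nonneg fun i (_ : i ∈ Finset.univ) => hα i
  unfold mixedWeight
  linarith

theorem mixedWeight_nonneg {α : Fin m → ℝ} (hα : ∀ i, 0 ≤ α i) (β : Fin n → ℕ) :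
    0 ≤ mixedWeight α β :=
  add_nonneg (Finset.sum_nonneg fun i _ => hα i) (by positivity)

theorem mixedWeight_eq_castAdd_add_natAdd (α : Fin m → ℝ) (β : Fin (n + q) → ℕ) :
    mixedWeight α β =
      mixedWeight α (fun i => β (Fin.castAdd q i)) + ∑ j, (β (Fin.natAdd n j) : ℝ) := by
  simp only [mixedWeight, Fin.sum_univ_add (f := fun j => (β j : ℝ))]
  ring

theorem MixedNatural.finite_weight_le {a : (Fin m → ℝ) → (Fin n → ℕ) → ℂ} (ha : MixedNatural a)
    (ν : ℝ) : {t : (Fin m → ℝ) × (Fin n → ℕ) | a t.1 t.2 ≠ 0 ∧ mixedWeight t.1 t.2 ≤ ν}.Finite := by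
  have hν : 0 < max ν 1 := lt_max_of_lt_right one_pos
  refine ((Set.Finite.pi fun i => ha.2 i _ hν).prod
    (Set.Finite.pi fun _ => Set.finite_Iic ⌊max ν 1⌋₊)).subset ?_
  rintro ⟨α, β⟩ ⟨hab, hw⟩
  have hα := ha.1 α β hab
  refine ⟨fun i _ => ⟨⟨α, β, hab, rfl⟩, ?_⟩, fun j _ => Nat.le_floor ?_⟩
  · exact (single_le_mixedWeight_left hα β i).trans (hw.trans (le_max_left _ _))
  · exact (single_le_mixedWeight_right hα β j).trans (hw.trans (le_max_left _ _))

theorem MixedNatural.exists_gap {a : (Fin m → ℝ) → (Fin n → ℕ) → ℂ} (ha : MixedNatural a)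
    (ν₀ : ℝ) : ∃ μ, ν₀ < μ ∧
      ∀ α β, a α β ≠ 0 → mixedWeight α β ≤ μ → mixedWeight α β ≤ ν₀ := by
  set W := (fun t : (Fin m → ℝ) × (Fin n → ℕ) => mixedWeight t.1 t.2) ''
    {t | a t.1 t.2 ≠ 0 ∧ mixedWeight t.1 t.2 ≤ ν₀ + 1} ∩ Set.Ioi ν₀
  have hW : W.Finite := ((ha.finite_weight_le _).image _).inter_of_left _
  have hev : ∀ᶠ μ in 𝓝[>] ν₀, (ν₀ < μ ∧ μ ≤ ν₀ + 1) ∧ ∀ w ∈ W, μ < w :=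
    ((eventually_mem_nhdsWithin (a := ν₀) (s := Set.Ioi ν₀)).and
      (nhdsWithin_le_nhds (eventually_le_nhds (by linarith)))).and
      (hW.eventually_all.2 fun w hw => nhdsWithin_le_nhds (eventually_lt_nhds hw.2))
  obtain ⟨μ, ⟨hμ, hμ1⟩, hμW⟩ := hev.exists
  refine ⟨μ, hμ, fun α β hab hle => not_lt.1 fun hlt => (hμW _ ?_).not_ge hle⟩
  exact ⟨⟨(α, β), ⟨hab, hle.trans hμ1⟩, rfl⟩, hlt⟩

def appendCoeff (B : (Fin q → ℕ) → (Fin m → ℝ) → (Fin n → ℕ) → ℂ) (α : Fin m → ℝ)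
    (β : Fin (n + q) → ℕ) : ℂ :=
  B (fun j => β (Fin.natAdd n j)) α (fun i => β (Fin.castAdd q i))

theorem mixedNatural_appendCoeff {B : (Fin q → ℕ) → (Fin m → ℝ) → (Fin n → ℕ) → ℂ}
    {S : Set ((Fin m → ℝ) × (Fin n → ℕ))} (hB : ∀ p, MixedNatural (B p))
    (hsupp : ∀ p α β, B p α β ≠ 0 → (α, β) ∈ S)
    (hSnat : ∀ i : Fin m, ∀ r : ℝ, 0 < r → {t : ℝ | (∃ p ∈ S, p.1 i = t) ∧ t ≤ r}.Finite) :
    MixedNatural (appendCoeff B) := by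
  refine ⟨fun α β h => (hB _).1 _ _ h, fun i r hr => (hSnat i r hr).subset ?_⟩
  rintro t ⟨⟨α, β, h, rfl⟩, ht⟩
  exact ⟨⟨_, hsupp _ _ _ h, rfl⟩, ht⟩

def sigmaAppendEquiv (A C : Type*) (n q : ℕ) :
    (Σ _ : Fin q → C, A × (Fin n → C)) ≃ A × (Fin (n + q) → C) where
  toFun x := (x.2.1, Fin.append x.2.2 x.1)
  invFun x := ⟨fun j => x.2 (Fin.natAdd n j), x.1, fun i => x.2 (Fin.castAdd q i)⟩
  left_inv x := by simp
  right_inv x := by simp [Fin.append_castAdd_natAdd]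

theorem mixedPartialSum_appendCoeff (B : (Fin q → ℕ) → (Fin m → ℝ) → (Fin n → ℕ) → ℂ)
    (P : Finset (Fin q → ℕ)) (F : (Fin q → ℕ) → Finset ((Fin m → ℝ) × (Fin n → ℕ)))
    (x : (Fin m → ℂ) × (Fin (n + q) → ℂ)) :
    mixedPartialSum (appendCoeff B) ((P.sigma F).map (sigmaAppendEquiv _ _ n q).toEmbedding) x =
      ∑ p ∈ P, mixedPartialSum (B p) (F p) (zyPart x) * ∏ j, wPart x j ^ p j := by
  simp only [mixedPartialSum, Finset.sum_map, Finset.sum_sigma, Finset.sum_mul]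
  refine Finset.sum_congr rfl fun p _ => Finset.sum_congr rfl fun t _ => ?_
  simp [sigmaAppendEquiv, appendCoeff, zyPart, wPart, Fin.prod_univ_add]
  ring

end NaturalSupport

section Main

variable {m n q : ℕ} {c C R A : ℝ} {b : (Fin q → ℕ) → ((Fin m → ℂ) × (Fin n → ℂ)) → ℂ}
  {B : (Fin q → ℕ) → (Fin m → ℝ) → (Fin n → ℕ) → ℂ}

theorem summable_coeffTerm
    (hbd : ∀ p, ∀ z ∈ QDom c C m, ∀ y ∈ PDisc R n, ‖b p (z, y)‖ ≤ A / R ^ (∑ j, p j))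
    (hR : 0 < R) {x : (Fin m → ℂ) × (Fin (n + q) → ℂ)}
    (hx : x ∈ QDom c C m ×ˢ PDisc R (n + q)) : Summable fun p => coeffTerm b p x := by
  obtain ⟨u, hu, hev⟩ := exists_summable_bound_coeffTerm hbd hR hx
  exact hu.of_norm_bounded hev.self_of_nhds

theorem mem_map_sigmaAppendEquiv_iff {ν : ℝ} (hν : 0 ≤ ν) {P : Finset (Fin q → ℕ)}
    (hP : ∀ p, p ∈ P ↔ ∑ j, p j ≤ ⌊ν⌋₊) {μ : (Fin q → ℕ) → ℝ}
    {F : (Fin q → ℕ) → Finset ((Fin m → ℝ) × (Fin n → ℕ))}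
    (hB : ∀ p, MixedNatural (B p))
    (hF : ∀ p t, t ∈ F p ↔ B p t.1 t.2 ≠ 0 ∧ mixedWeight t.1 t.2 ≤ μ p)
    (hμ : ∀ p, max (ν - ∑ j, (p j : ℝ)) 0 < μ p)
    (hgap : ∀ p α β, B p α β ≠ 0 → mixedWeight α β ≤ μ p →
      mixedWeight α β ≤ max (ν - ∑ j, (p j : ℝ)) 0)
    (t : (Fin m → ℝ) × (Fin (n + q) → ℕ)) :
    t ∈ (P.sigma F).map (sigmaAppendEquiv _ _ n q).toEmbedding ↔
      appendCoeff B t.1 t.2 ≠ 0 ∧ mixedWeight t.1 t.2 ≤ ν := by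
  obtain ⟨α, β⟩ := t
  rw [Finset.mem_map_equiv, Finset.mem_sigma, hP, hF, mixedWeight_eq_castAdd_add_natAdd]
  simp only [sigmaAppendEquiv, Equiv.coe_fn_symm_mk, appendCoeff]
  set p : Fin q → ℕ := fun j => β (Fin.natAdd n j)
  set w := mixedWeight α fun i => β (Fin.castAdd q i)
  have hp : ∑ j, (β (Fin.natAdd n j) : ℝ) = ((∑ j, p j : ℕ) : ℝ) := by push_cast; rfl
  rw [hp]
  constructor
  · rintro ⟨hpν, hB0, hle⟩
    have hpν' : ((∑ j, p j : ℕ) : ℝ) ≤ ν := (Nat.cast_le.2 hpν).trans (Nat.floor_le hν)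
    have := hgap p _ _ hB0 hle
    rw [← Nat.cast_sum, max_eq_left (by linarith)] at this
    exact ⟨hB0, by linarith⟩
  · rintro ⟨hB0, hle⟩
    have hw0 : 0 ≤ w := mixedWeight_nonneg ((hB p).1 _ _ hB0) _
    refine ⟨Nat.le_floor (by linarith), hB0, (lt_of_le_of_lt ?_ (hμ p)).le⟩
    rw [← Nat.cast_sum]
    exact le_max_of_le_left (by linarith)

theorem isLittleO_tsum_coeffTerm_sub_sum (hR : 0 < R) (hA : 0 ≤ A)
    (hbd : ∀ p, ∀ z ∈ QDom c C m, ∀ y ∈ PDisc R n, ‖b p (z, y)‖ ≤ A / R ^ (∑ j, p j))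
    {ν : ℝ} (hν : 0 ≤ ν) {P : Finset (Fin q → ℕ)} (hP : ∀ p, ((∑ j, p j : ℕ) : ℝ) ≤ ν → p ∈ P)
    {μ : (Fin q → ℕ) → ℝ} (hμ0 : ∀ p, 0 < μ p) (hμ : ∀ p ∈ P, ν ≤ μ p + ∑ j, (p j : ℝ))
    {c' C' R' : ℝ} (hc' : SQD c' C' ⊆ SQD c C) (hR' : R' ≤ R)
    {T : (Fin q → ℕ) → (Fin m → ℂ) × (Fin n → ℂ) → ℂ}
    (hT : ∀ p ∈ P, (fun x => b p (zyPart x) - T p (zyPart x)) =o[mixedZero c' C' R' m (n + q)]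
      fun x => mixedNorm (zyPart x).1 (zyPart x).2 ^ μ p) :
    (fun x => ∑' p, coeffTerm b p x - ∑ p ∈ P, T p (zyPart x) * ∏ j, wPart x j ^ p j)
      =o[mixedZero c' C' R' m (n + q)] fun x => mixedNorm x.1 x.2 ^ ν := by
  have hN := tendsto_mixedNorm_mixedZero (c := c') (C := C') (R := R') (m := m) (n := n + q)
  have hhead p (hp : p ∈ P) :=
    isLittleO_mul_prod_wPart (f := fun y => b p y - T p y) hN (hT p hp) (hμ0 p) hν (hμ p hp)
  have htail : (fun x => ∑' p : ((P : Set (Fin q → ℕ))ᶜ : Set _), coeffTerm b p x)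
      =o[mixedZero c' C' R' m (n + q)] fun x => mixedNorm x.1 x.2 ^ ν := by
    refine (isBigO_tsum_coeffTerm hbd hR hA (K := ⌊ν⌋₊ + 1) (fun p hp => ?_) hc' hR')
      |>.trans_isLittleO (isLittleO_rpow_rpow_of_lt hN (fun _ => mixedNorm_nonneg _ _) hν ?_)
    · exact Nat.succ_le_of_lt ((Nat.floor_lt hν).2 (not_le.1 fun h => hp (hP p h)))
    · push_cast; exact Nat.lt_floor_add_one ν
  refine ((IsLittleO.fun_sum hhead).add htail).congr' ?_ EventuallyEq.rfl
  filter_upwards [eventually_mem_mixedZero] with x hx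
  have hsum := summable_coeffTerm hbd hR ⟨QDom_subset_QDom hc' hx.1, PDisc_subset_PDisc hR' hx.2⟩
  rw [← hsum.sum_add_tsum_compl]
  simp only [coeffTerm, sub_mul, Finset.sum_sub_distrib]
  ring

theorem exists_SQD_subset_forall_mem {ι : Type*} {P : Finset ι} (hP : P.Nonempty)
    {cp Cp Rp : ι → ℝ} (hcp : ∀ p, 0 < cp p) (hCp : ∀ p, 0 < Cp p) (hRp : ∀ p, 0 < Rp p) :
    ∃ c' C' R' : ℝ, 0 < c' ∧ 0 < C' ∧ 0 < R' ∧
      ∀ p ∈ P, SQD c' C' ⊆ SQD (cp p) (Cp p) ∧ R' ≤ Rp p := by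
  have hc' : 0 < P.inf' hP cp := (Finset.lt_inf'_iff hP).2 fun p _ => hcp p
  obtain ⟨p₀, hp₀⟩ := id hP
  refine ⟨P.inf' hP cp, P.sup' hP Cp, P.inf' hP Rp, hc', (hCp p₀).trans_le (Finset.le_sup' _ hp₀),
    (Finset.lt_inf'_iff hP).2 fun p _ => hRp p, fun p hp => ⟨?_, Finset.inf'_le _ hp⟩⟩
  exact SQD_subset_SQD hc' (Finset.inf'_le _ hp) (Finset.le_sup' _ hp)

theorem hasMixedAsymExp_tsum_coeffTerm (hR : 0 < R) (hA : 0 < A)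
    {S : Set ((Fin m → ℝ) × (Fin n → ℕ))}
    (hSnat : ∀ i : Fin m, ∀ r : ℝ, 0 < r → {t : ℝ | (∃ p ∈ S, p.1 i = t) ∧ t ≤ r}.Finite)
    (hbexp : ∀ p, HasMixedAsymExp c C R (b p) (B p))
    (hsupp : ∀ p α β, B p α β ≠ 0 → (α, β) ∈ S)
    (hbd : ∀ p, ∀ z ∈ QDom c C m, ∀ y ∈ PDisc R n, ‖b p (z, y)‖ ≤ A / R ^ (∑ j, p j)) :
    HasMixedAsymExp c C R (fun x => ∑' p, coeffTerm b p x) (appendCoeff B) := by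
  have hB p := (hbexp p).1
  refine hasMixedAsymExp_iff.2 ⟨mixedNatural_appendCoeff hB hsupp hSnat, fun ν hν => ?_⟩
  obtain ⟨P, hP⟩ : ∃ P : Finset (Fin q → ℕ), ∀ p, p ∈ P ↔ ∑ j, p j ≤ ⌊ν⌋₊ :=
    ⟨(Finset.range (⌊ν⌋₊ + 1)).biUnion (Finset.Nat.antidiagonalTuple q), by
      simp [Finset.Nat.mem_antidiagonalTuple]⟩
  have hPne : P.Nonempty := ⟨0, by simp [hP]⟩
  -- `μ p > ν - |p|` makes the error of `b_p` times `w^p` an `o(‖·‖^ν)`; choosing `μ p` in a gap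
  -- of the weights of `B p` makes the partial sum of order `μ p` the one of order `ν - |p|`.
  choose μ hμ hgap using fun p => (hB p).exists_gap (max (ν - ∑ j, (p j : ℝ)) 0)
  have hμ0 p : 0 < μ p := (le_max_right _ _).trans_lt (hμ p)
  choose cp Cp Rp hcp hCp hRp hRpR hSQDp F hF hbF using
    fun p => (hasMixedAsymExp_iff.1 (hbexp p)).2 (μ p) (hμ0 p)
  obtain ⟨c', C', R', hc', hC', hR', hsub⟩ := exists_SQD_subset_forall_mem hPne hcp hCp hRp
  obtain ⟨p₀, hp₀⟩ := hPne
  have hc'C := (hsub p₀ hp₀).1.trans (hSQDp p₀)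
  have hR'R := (hsub p₀ hp₀).2.trans (hRpR p₀)
  refine ⟨c', C', R', hc', hC', hR', hR'R, hc'C, _,
    mem_map_sigmaAppendEquiv_iff hν.le hP hB hF hμ hgap, ?_⟩
  refine (isLittleO_tsum_coeffTerm_sub_sum hR hA.le hbd hν.le
    (fun p hp => (hP p).2 (Nat.le_floor hp)) hμ0
    (fun p _ => by linarith [le_max_left (ν - ∑ j, (p j : ℝ)) 0, hμ p]) hc'C hR'R
    fun p hp => (hbF p).comp_tendsto (tendsto_zyPart_mixedZero (hsub p hp).1 (hsub p hp).2)
    ).congr_left fun x => ?_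
  rw [mixedPartialSum_appendCoeff]

end Main

theorem stmt8_general (m n q : ℕ) (c C R A : ℝ) (hR : 0 < R) (hA : 0 < A)
    (S : Set ((Fin m → ℝ) × (Fin n → ℕ)))
    (hSnat : ∀ i : Fin m, ∀ r : ℝ, 0 < r → {t : ℝ | (∃ p ∈ S, p.1 i = t) ∧ t ≤ r}.Finite)
    (b : (Fin q → ℕ) → ((Fin m → ℂ) × (Fin n → ℂ)) → ℂ)
    (B : (Fin q → ℕ) → (Fin m → ℝ) → (Fin n → ℕ) → ℂ)
    (hbdiff : ∀ p, DifferentiableOn ℂ (b p) ((QDom c C m) ×ˢ (PDisc R n)))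
    (hbexp : ∀ p, HasMixedAsymExp c C R (b p) (B p))
    (hsupp : ∀ p α β, B p α β ≠ 0 → (α, β) ∈ S)
    (hbd : ∀ p, ∀ z ∈ QDom c C m, ∀ y ∈ PDisc R n, ‖b p (z, y)‖ ≤ A / R ^ (∑ j, p j)) :
    ∃ g : ((Fin m → ℂ) × (Fin (n + q) → ℂ)) → ℂ,
      (∀ z ∈ QDom c C m, ∀ y ∈ PDisc R n, ∀ w ∈ PDisc R q,
        HasSum (fun p : Fin q → ℕ => b p (z, y) * ∏ j, (w j) ^ (p j))
          (g (z, Fin.append y w))) ∧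
      TendstoLocallyUniformlyOn
        (fun (F : Finset (Fin q → ℕ)) (x : (Fin m → ℂ) × (Fin (n + q) → ℂ)) =>
          ∑ p ∈ F, b p (x.1, fun j : Fin n => x.2 (Fin.castAdd q j)) *
            ∏ j : Fin q, (x.2 (Fin.natAdd n j)) ^ (p j))
        g Filter.atTop ((QDom c C m) ×ˢ (PDisc R (n + q))) ∧
      DifferentiableOn ℂ g ((QDom c C m) ×ˢ (PDisc R (n + q))) ∧
      HasMixedAsymExp c C R g
        (fun α βp => B (fun j : Fin q => βp (Fin.natAdd n j)) α
          (fun i : Fin n => βp (Fin.castAdd q i))) := by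
  have hbound x (hx : x ∈ QDom c C m ×ˢ PDisc R (n + q)) :=
    exists_summable_bound_coeffTerm (b := b) hbd hR hx
  refine ⟨fun x => ∑' p, coeffTerm b p x, fun z hz y hy w hw => ?_,
    tendstoLocallyUniformlyOn_tsum_of_locally_bounded hbound,
    differentiableOn_tsum_of_locally_bounded ((isOpen_QDom c C m).prod (isOpen_PDisc R _))
      (fun p => differentiableOn_coeffTerm (hbdiff p)) hbound,
    hasMixedAsymExp_tsum_coeffTerm hR hA hSnat hbexp hsupp hbd⟩
  have hyw : (z, Fin.append y w) ∈ QDom c C m ×ˢ PDisc R (n + q) :=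
    ⟨hz, Fin.addCases (fun i => by simpa using hy i) (fun j => by simpa using hw j)⟩
  simpa [coeffTerm, zyPart, wPart] using (summable_coeffTerm hbd hR hyw).hasSum

/-- Summing up coefficient functions: if the `b_p` are holomorphic on
`Ω(c,C)^m × D_R^n` with mixed expansions `B_p` all supported in a fixed natural set `S` and
`|b_p| ≤ A/R^{|p|}`, then `g(z,y,w) = Σ_p b_p(z,y)·w^p` converges locally uniformly on
`Ω(c,C)^m × D_R^n × D_R^q`, is holomorphic there, and has mixed asymptotic expansion
`(α,β,p) ↦ B_p(α,β)`. -/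
theorem stmt8 (m n q : ℕ) (c C R A : ℝ) (hc : 0 < c) (hC : 0 < C) (hR : 0 < R) (hA : 0 < A)
    (S : Set ((Fin m → ℝ) × (Fin n → ℕ)))
    (hS0 : ∀ p ∈ S, ∀ i, 0 ≤ p.1 i)
    (hSnat : ∀ i : Fin m, ∀ r : ℝ, 0 < r → {t : ℝ | (∃ p ∈ S, p.1 i = t) ∧ t ≤ r}.Finite)
    (b : (Fin q → ℕ) → ((Fin m → ℂ) × (Fin n → ℂ)) → ℂ)
    (B : (Fin q → ℕ) → (Fin m → ℝ) → (Fin n → ℕ) → ℂ)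
    (hbdiff : ∀ p, DifferentiableOn ℂ (b p) ((QDom c C m) ×ˢ (PDisc R n)))
    (hbexp : ∀ p, HasMixedAsymExp c C R (b p) (B p))
    (hsupp : ∀ p α β, B p α β ≠ 0 → (α, β) ∈ S)
    (hbd : ∀ p, ∀ z ∈ QDom c C m, ∀ y ∈ PDisc R n, ‖b p (z, y)‖ ≤ A / R ^ (∑ j, p j)) :
    ∃ g : ((Fin m → ℂ) × (Fin (n + q) → ℂ)) → ℂ,
      (∀ z ∈ QDom c C m, ∀ y ∈ PDisc R n, ∀ w ∈ PDisc R q,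
        HasSum (fun p : Fin q → ℕ => b p (z, y) * ∏ j, (w j) ^ (p j))
          (g (z, Fin.append y w))) ∧
      TendstoLocallyUniformlyOn
        (fun (F : Finset (Fin q → ℕ)) (x : (Fin m → ℂ) × (Fin (n + q) → ℂ)) =>
          ∑ p ∈ F, b p (x.1, fun j : Fin n => x.2 (Fin.castAdd q j)) *
            ∏ j : Fin q, (x.2 (Fin.natAdd n j)) ^ (p j))
        g Filter.atTop ((QDom c C m) ×ˢ (PDisc R (n + q))) ∧
      DifferentiableOn ℂ g ((QDom c C m) ×ˢ (PDisc R (n + q))) ∧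
      HasMixedAsymExp c C R g
        (fun α βp => B (fun j : Fin q => βp (Fin.natAdd n j)) α
          (fun i : Fin n => βp (Fin.castAdd q i))) :=
  stmt8_general m n q c C R A hR hA S hSnat b B hbdiff hbexp hsupp hbd
end
end

section
/- Let f be holomorphic on Ω(c,C)^m × D_R (one disc variable) with mixed asymptotic expansion a : [0,∞)^m × ℕ → ℂ. Then the function g(z, w₁, w₂) := f(z, w₁ + w₂) is holomorphic on Ω(c,C)^m × D_{R/2} × D_{R/2} and has mixed asymptotic expansion (α, (p,q)) ↦ Nat.choose (p+q) p · a(α, p+q). -/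
noncomputable section
open scoped Classical

/-- Splitting a disc variable: if `f` has mixed asymptotic expansion `a`
on `Ω(c,C)^m × D_R`, then `g(z,w₁,w₂) := f(z,w₁+w₂)` is holomorphic on
`Ω(c,C)^m × D_{R/2} × D_{R/2}` with mixed asymptotic expansion
`(α,(p,q)) ↦ C(p+q,p)·a(α,p+q)`. -/
theorem stmt17 (m : ℕ) (c C R : ℝ) (hc : 0 < c) (hC : 0 < C) (hR : 0 < R)
    (f : ((Fin m → ℂ) × (Fin 1 → ℂ)) → ℂ)
    (hf : DifferentiableOn ℂ f ((QDom c C m) ×ˢ (PDisc R 1)))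
    (a : (Fin m → ℝ) → (Fin 1 → ℕ) → ℂ) (ha : HasMixedAsymExp c C R f a) :
    DifferentiableOn ℂ
      (fun p : (Fin m → ℂ) × (Fin 2 → ℂ) => f (p.1, fun _ => p.2 0 + p.2 1))
      ((QDom c C m) ×ˢ (PDisc (R / 2) 2)) ∧
    HasMixedAsymExp c C (R / 2)
      (fun p : (Fin m → ℂ) × (Fin 2 → ℂ) => f (p.1, fun _ => p.2 0 + p.2 1))
      (fun α β => (Nat.choose (β 0 + β 1) (β 0) : ℂ) * a α (fun _ => β 0 + β 1)) := by
  obtain ⟨⟨haNN, haFin⟩, hExp⟩ := ha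
  constructor
  · -- holomorphy
    have hmap : Set.MapsTo
        (fun p : (Fin m → ℂ) × (Fin 2 → ℂ) =>
          ((p.1, fun _ : Fin 1 => p.2 0 + p.2 1) : (Fin m → ℂ) × (Fin 1 → ℂ)))
        ((QDom c C m) ×ˢ (PDisc (R / 2) 2)) ((QDom c C m) ×ˢ (PDisc R 1)) := by
      rintro ⟨z, w⟩ ⟨hz, hw⟩
      refine ⟨hz, fun j => ?_⟩
      have h0 := hw 0
      have h1 := hw 1
      simp only [Disc, Set.mem_setOf_eq] at h0 h1 ⊢
      calc ‖w 0 + w 1‖ ≤ ‖w 0‖ + ‖w 1‖ := norm_add_le _ _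
        _ < R / 2 + R / 2 := by linarith
        _ = R := by ring
    have hd : Differentiable ℂ
        (fun p : (Fin m → ℂ) × (Fin 2 → ℂ) =>
          ((p.1, fun _ : Fin 1 => p.2 0 + p.2 1) : (Fin m → ℂ) × (Fin 1 → ℂ))) := by
      fun_prop
    exact DifferentiableOn.comp hf hd.differentiableOn hmap
  · refine ⟨⟨?_, ?_⟩, ?_⟩
    · intro α β h i
      refine haNN α (fun _ => β 0 + β 1) ?_ i
      exact right_ne_zero_of_mul h
    · intro i R0 hR0
      refine Set.Finite.subset (haFin i R0 hR0) ?_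
      rintro r ⟨⟨α, β, hne, hr⟩, hle⟩
      exact ⟨⟨α, fun _ => β 0 + β 1, right_ne_zero_of_mul hne, hr⟩, hle⟩
    · intro ν hν
      obtain ⟨c', C', R', hc', hC', hR', hR'le, hsub, F, hF, hεδ⟩ := hExp ν hν
      refine ⟨c', C', R' / 2, hc', hC', by linarith, by linarith, hsub, ?_⟩
      -- helper: any Fin 1 → ℕ is constant
      have hfin1 : ∀ β : Fin 1 → ℕ, β = fun _ => β 0 := by
        intro β; funext j; rw [Subsingleton.elim j 0]
      -- the new finite support set
      set G : Finset ((Fin m → ℝ) × (Fin 2 → ℕ)) :=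
        (F.sigma fun q => Finset.range (q.2 0 + 1)).image
          (fun s => (s.1.1, fun j : Fin 2 => if j = 0 then s.2 else s.1.2 0 - s.2)) with hGdef
      have hmemG : ∀ pr : (Fin m → ℝ) × (Fin 2 → ℕ), pr ∈ G ↔
          ((Nat.choose (pr.2 0 + pr.2 1) (pr.2 0) : ℂ) *
            a pr.1 (fun _ => pr.2 0 + pr.2 1) ≠ 0 ∧
          (∑ i, pr.1 i) + (∑ j, (pr.2 j : ℝ)) ≤ ν) := by
        intro pr
        constructor
        · intro hpr
          rw [hGdef, Finset.mem_image] at hpr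
          obtain ⟨s, hs, hspr⟩ := hpr
          rw [Finset.mem_sigma] at hs
          obtain ⟨hsF, hsr⟩ := hs
          rw [Finset.mem_range, Nat.lt_succ_iff] at hsr
          obtain ⟨hane, hsum⟩ := (hF s.1).mp hsF
          subst hspr
          have h0 : (fun j : Fin 2 => if j = 0 then s.2 else s.1.2 0 - s.2) 0 = s.2 := rfl
          have h1 : (fun j : Fin 2 => if j = 0 then s.2 else s.1.2 0 - s.2) 1 = s.1.2 0 - s.2 := rfl
          have hk : s.2 + (s.1.2 0 - s.2) = s.1.2 0 := Nat.add_sub_cancel' hsr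
          constructor
          · show (Nat.choose (s.2 + (s.1.2 0 - s.2)) s.2 : ℂ) *
              a s.1.1 (fun _ => s.2 + (s.1.2 0 - s.2)) ≠ 0
            rw [hk, ← hfin1 s.1.2]
            exact mul_ne_zero (Nat.cast_ne_zero.mpr (Nat.choose_pos hsr).ne') hane
          · show (∑ i, s.1.1 i) +
              (∑ j : Fin 2, ((fun j : Fin 2 => if j = 0 then s.2 else s.1.2 0 - s.2) j : ℝ)) ≤ ν
            rw [Fin.sum_univ_two]
            show (∑ i, s.1.1 i) + ((s.2 : ℝ) + ((s.1.2 0 - s.2 : ℕ) : ℝ)) ≤ ν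
            have hcast : (s.2 : ℝ) + ((s.1.2 0 - s.2 : ℕ) : ℝ) = (s.1.2 0 : ℝ) := by
              exact_mod_cast congrArg (fun n : ℕ => (n : ℝ)) hk
            rw [hcast]
            simpa [Fin.sum_univ_one] using hsum
        · rintro ⟨hne, hsum⟩
          have hane : a pr.1 (fun _ => pr.2 0 + pr.2 1) ≠ 0 := right_ne_zero_of_mul hne
          have hqF : (pr.1, fun _ : Fin 1 => pr.2 0 + pr.2 1) ∈ F := by
            rw [hF]
            refine ⟨hane, ?_⟩
            simp only [Fin.sum_univ_one]
            push_cast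
            simpa [Fin.sum_univ_two] using hsum
          rw [hGdef, Finset.mem_image]
          refine ⟨⟨(pr.1, fun _ : Fin 1 => pr.2 0 + pr.2 1), pr.2 0⟩, ?_, ?_⟩
          · rw [Finset.mem_sigma]
            exact ⟨hqF, Finset.mem_range.mpr (Nat.lt_succ_of_le (Nat.le_add_right _ _))⟩
          · refine Prod.ext rfl ?_
            funext j
            fin_cases j
            · rfl
            · simp
      refine ⟨G, hmemG, ?_⟩
      -- the sum identity
      have hsum_eq : ∀ (z : Fin m → ℂ) (y : Fin 2 → ℂ),
          (∑ pr ∈ G, ((Nat.choose (pr.2 0 + pr.2 1) (pr.2 0) : ℂ) *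
              a pr.1 (fun _ => pr.2 0 + pr.2 1)) * expMono pr.1 z * ∏ j, (y j) ^ (pr.2 j))
          = ∑ q ∈ F, a q.1 q.2 * expMono q.1 z * (y 0 + y 1) ^ (q.2 0) := by
        intro z y
        rw [hGdef]
        rw [Finset.sum_image ?hinj]
        case hinj =>
          intro s hs t ht hst
          obtain ⟨⟨sα, sβ⟩, sp⟩ := s
          obtain ⟨⟨tα, tβ⟩, tp⟩ := t
          simp only [Finset.mem_coe, Finset.mem_sigma, Finset.mem_range, Nat.lt_succ_iff] at hs ht
          obtain ⟨-, hs2⟩ := hs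
          obtain ⟨-, ht2⟩ := ht
          simp only [Prod.mk.injEq] at hst
          obtain ⟨h1, h2⟩ := hst
          have hp : sp = tp := congrFun h2 0
          have hq : sβ 0 - sp = tβ 0 - tp := congrFun h2 1
          have hk : sβ 0 = tβ 0 := by omega
          have hβ : sβ = tβ := by rw [hfin1 sβ, hfin1 tβ, hk]
          subst h1
          subst hβ
          subst hp
          rfl
        rw [Finset.sum_sigma]
        refine Finset.sum_congr rfl ?_
        intro q hq
        rw [add_pow, Finset.mul_sum]
        refine Finset.sum_congr rfl ?_
        intro p hp
        rw [Finset.mem_range, Nat.lt_succ_iff] at hp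
        have hk : p + (q.2 0 - p) = q.2 0 := Nat.add_sub_cancel' hp
        rw [Fin.prod_univ_two]
        show ((Nat.choose (p + (q.2 0 - p)) p : ℂ) * a q.1 (fun _ => p + (q.2 0 - p))) *
            expMono q.1 z * (y 0 ^ p * y 1 ^ (q.2 0 - p)) =
          a q.1 q.2 * expMono q.1 z * (y 0 ^ p * y 1 ^ (q.2 0 - p) * (Nat.choose (q.2 0) p : ℂ))
        rw [hk, ← hfin1 q.2]
        ring
      intro ε hε
      have hsν : (0 : ℝ) < Real.sqrt 2 ^ ν :=
        Real.rpow_pos_of_pos (Real.sqrt_pos.mpr (by norm_num)) ν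
      obtain ⟨δ, hδ, hbound⟩ := hεδ (ε / Real.sqrt 2 ^ ν) (div_pos hε hsν)
      have hs2 : (0 : ℝ) < Real.sqrt 2 := Real.sqrt_pos.mpr (by norm_num)
      refine ⟨δ / Real.sqrt 2, div_pos hδ hs2, ?_⟩
      intro z hz y hy hnorm
      set ty : Fin 1 → ℂ := fun _ => y 0 + y 1 with hty
      have hty1 : ty ∈ PDisc (R') 1 := by
        intro j
        have h0 := hy 0
        have h1 := hy 1
        simp only [Disc, PDisc, Set.mem_setOf_eq] at h0 h1 ⊢
        calc ‖y 0 + y 1‖ ≤ ‖y 0‖ + ‖y 1‖ := norm_add_le _ _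
          _ < R' / 2 + R' / 2 := by linarith
          _ = R' := by ring
      have hkey : mixedNorm z ty ≤ Real.sqrt 2 * mixedNorm z y := by
        rw [mixedNorm, mixedNorm, ← Real.sqrt_mul (by norm_num : (0:ℝ) ≤ 2)]
        refine Real.sqrt_le_sqrt ?_
        have hS : (0:ℝ) ≤ ∑ i, Real.exp ((z i).re) ^ 2 :=
          Finset.sum_nonneg fun i _ => sq_nonneg _
        have hadd : ‖y 0 + y 1‖ ^ 2 ≤ 2 * (‖y 0‖ ^ 2 + ‖y 1‖ ^ 2) := by
          nlinarith [norm_add_le (y 0) (y 1), norm_nonneg (y 0 + y 1),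
            norm_nonneg (y 0), norm_nonneg (y 1), sq_nonneg (‖y 0‖ - ‖y 1‖)]
        simp only [Fin.sum_univ_one, Fin.sum_univ_two, hty]
        nlinarith
      have hnorm' : mixedNorm z ty < δ := by
        calc mixedNorm z ty ≤ Real.sqrt 2 * mixedNorm z y := hkey
          _ < Real.sqrt 2 * (δ / Real.sqrt 2) := by
              exact mul_lt_mul_of_pos_left hnorm hs2
          _ = δ := by field_simp
      have hb := hbound z hz ty hty1 hnorm'
      have hprod : ∀ q : (Fin m → ℝ) × (Fin 1 → ℕ),
          (∏ j, (ty j) ^ (q.2 j)) = (y 0 + y 1) ^ (q.2 0) := by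
        intro q
        simp [Fin.prod_univ_one, hty]
      simp only [hprod] at hb
      have hmn : (0 : ℝ) ≤ mixedNorm z y := Real.sqrt_nonneg _
      have hmono : mixedNorm z ty ^ ν ≤ Real.sqrt 2 ^ ν * mixedNorm z y ^ ν := by
        calc mixedNorm z ty ^ ν ≤ (Real.sqrt 2 * mixedNorm z y) ^ ν :=
              Real.rpow_le_rpow (Real.sqrt_nonneg _) hkey hν.le
          _ = Real.sqrt 2 ^ ν * mixedNorm z y ^ ν := Real.mul_rpow hs2.le hmn
      calc ‖f (z, fun _ => y 0 + y 1) - ∑ pr ∈ G,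
              ((Nat.choose (pr.2 0 + pr.2 1) (pr.2 0) : ℂ) *
                a pr.1 (fun _ => pr.2 0 + pr.2 1)) * expMono pr.1 z * ∏ j, (y j) ^ (pr.2 j)‖
          = ‖f (z, ty) - ∑ q ∈ F, a q.1 q.2 * expMono q.1 z * (y 0 + y 1) ^ (q.2 0)‖ := by
            rw [hsum_eq z y]
        _ ≤ ε / Real.sqrt 2 ^ ν * mixedNorm z ty ^ ν := hb
        _ ≤ ε / Real.sqrt 2 ^ ν * (Real.sqrt 2 ^ ν * mixedNorm z y ^ ν) := by
            exact mul_le_mul_of_nonneg_left hmono (le_of_lt (div_pos hε hsν))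
        _ = ε * mixedNorm z y ^ ν := by
            have h2ν : Real.sqrt 2 ^ ν ≠ 0 := hsν.ne'
            field_simp
end
end
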